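/- For all integers n ≥ 1 and 1 ≤ j ≤ n, and all z: P_n(z; α+j, β−j) = P_n(z) + Σ_{l=1}^{j} C^{(l)}_{n,j} · P_{n−l}(z). -/

import Mathlib

/-!
The case `j = 1` is the contiguous relation
`P_{m+1}(z; α+1, β-1) = P_{m+1}(z) + b_{m+1}(α, β) P_m(z)`, which is checked coefficientwise:
once every shifted Pochhammer symbol is written through the unshifted ones, the coefficients
of `z^k` satisfy a rational identity. Applying it with parameters `(α+j, β-j)` and expanding
both `P(α+j, β-j)` terms by induction, the coefficients combine exactly by the recursion of
`C^{(l)}_{n,j}`. Including the term `l = 0` (where `C = 1`) makes the induction uniform from `j = 0`.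
-/

open Finset

/-- Pochhammer symbol `(a)_k = a (a+1) ⋯ (a+k-1)`. -/
noncomputable def poch (a : ℝ) (k : ℕ) : ℝ := ∏ i ∈ Finset.range k, (a + (i : ℝ))

/-- The Hendriksen–van Rossum polynomial `P_n(z; α, β)`. -/
noncomputable def HR (α β : ℝ) (n : ℕ) (z : ℝ) : ℝ :=
  (poch β n / poch (α + 1) n) *
    ∑ k ∈ Finset.range (n + 1),
      poch (-(n : ℝ)) k * poch (α + 1) k /
          (poch (1 - β - (n : ℝ)) k * (Nat.factorial k : ℝ)) * z ^ k

/-- `d_m(α,β) = −(m+β)/(m+α+1)`. -/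
noncomputable def dco (α β m : ℝ) : ℝ := -(m + β) / (m + α + 1)

/-- `b_m(α,β) = −m(m+α+β)/((m+α)(m+α+1))`. -/
noncomputable def bco (α β m : ℝ) : ℝ := -(m * (m + α + β)) / ((m + α) * (m + α + 1))

/-- Connection coefficients `C^{(l)}_{n,j}` (computed with parameters `(α,β)`):
`C^{(0)}_{n,j} = 1`; `C^{(1)}_{n,j} = Σ_{k=0}^{j−1} b_n(α+k, β−k)`;
`C^{(j)}_{n,j} = Π_{k=0}^{j−1} b_{n−k}(α+j−1−k, β−j+1+k)`;
`C^{(l)}_{n,j} = C^{(l)}_{n,j−1} + b_n(α+j−1, β−j+1)·C^{(l−1)}_{n−1,j−1}` for `2 ≤ l ≤ j−1`;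
and `0` out of range. Arguments: `Ccoef α β n j l`. -/
noncomputable def Ccoef (α β : ℝ) : ℕ → ℕ → ℕ → ℝ
  | _, _, 0 => 1
  | n, j, 1 =>
      if 1 ≤ j then ∑ k ∈ Finset.range j, bco (α + (k : ℝ)) (β - (k : ℝ)) (n : ℝ) else 0
  | _, 0, (_ + 2) => 0
  | n, (j + 1), (l + 2) =>
      if l + 2 = j + 1 then
        ∏ k ∈ Finset.range (j + 1),
          bco (α + (j : ℝ) - (k : ℝ)) (β - (j : ℝ) + (k : ℝ)) ((n : ℝ) - (k : ℝ))
      else if l + 2 ≤ j then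
        Ccoef α β n j (l + 2)
          + bco (α + (j : ℝ)) (β - (j : ℝ)) (n : ℝ) * Ccoef α β (n - 1) j (l + 1)
      else 0

lemma poch_succ (a : ℝ) (k : ℕ) : poch a (k + 1) = poch a k * (a + k) :=
  prod_range_succ _ _

lemma poch_succ' (a : ℝ) (k : ℕ) : poch a (k + 1) = a * poch (a + 1) k := by
  rw [poch, prod_range_succ', Nat.cast_zero, add_zero, mul_comm]
  congr 1
  exact prod_congr rfl fun i _ => by push_cast; ring

lemma poch_add_one {a : ℝ} (ha : a ≠ 0) (k : ℕ) : poch (a + 1) k = poch a k * (a + k) / a := by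
  rw [eq_div_iff ha, mul_comm, ← poch_succ', poch_succ]

lemma poch_neg_natCast_succ (m : ℕ) : poch (-(m : ℝ)) (m + 1) = 0 :=
  prod_eq_zero (self_mem_range_succ m) (neg_add_cancel _)

lemma ne_zero_of_eq_add_intCast {a x : ℝ} (ha : ∀ m : ℤ, a ≠ m) (c : ℤ) (hx : x = a + c) :
    x ≠ 0 := fun h => ha (-c) (by push_cast; linarith)

noncomputable def hrCoef (α β : ℝ) (n k : ℕ) : ℝ :=
  poch β n / poch (α + 1) n *
    (poch (-(n : ℝ)) k * poch (α + 1) k / (poch (1 - β - (n : ℝ)) k * (Nat.factorial k : ℝ)))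

lemma HR_eq_sum (α β : ℝ) (n : ℕ) (z : ℝ) :
    HR α β n z = ∑ k ∈ range (n + 1), hrCoef α β n k * z ^ k := by
  simp only [HR, hrCoef, mul_sum, mul_assoc]

lemma hrCoef_contiguous (α β : ℝ) (hα : ∀ m : ℤ, α ≠ m) (hβ : ∀ m : ℤ, β ≠ m) (m k : ℕ) :
    hrCoef (α + 1) (β - 1) (m + 1) k
      = hrCoef α β (m + 1) k + bco α β (m + 1) * hrCoef α β m k := by
  have hβ' : ∀ t : ℤ, -β ≠ t := fun t h => hβ (-t) (by push_cast; linarith)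
  rw [hrCoef, hrCoef, hrCoef]
  push_cast
  set b := 1 - β - ((m : ℝ) + 1)
  have ha : α + 1 ≠ 0 := ne_zero_of_eq_add_intCast hα 1 (by simp)
  have hb : b ≠ 0 := ne_zero_of_eq_add_intCast hβ' (-m) (by simp [b]; ring)
  have hm : -((m : ℝ) + 1) ≠ 0 := neg_ne_zero.mpr (by positivity)
  rw [poch_succ' (β - 1), sub_add_cancel, poch_succ β, poch_succ (α + 1), poch_add_one ha (m + 1),
    poch_add_one ha k, show 1 - (β - 1) - ((m : ℝ) + 1) = b + 1 by ring,
    show 1 - β - (m : ℝ) = b + 1 by ring, poch_add_one hb,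
    show -(m : ℝ) = -((m : ℝ) + 1) + 1 by ring, poch_add_one hm, poch_succ (α + 1), bco]
  push_cast
  have : b + k ≠ 0 := ne_zero_of_eq_add_intCast hβ' (k - m) (by simp [b]; ring)
  have : α + 1 + m ≠ 0 := ne_zero_of_eq_add_intCast hα (1 + m) (by push_cast; ring)
  have : α + 1 + ((m : ℝ) + 1) ≠ 0 := ne_zero_of_eq_add_intCast hα (2 + m) (by push_cast; ring)
  have : (m : ℝ) + 1 + α ≠ 0 := ne_zero_of_eq_add_intCast hα (1 + m) (by push_cast; ring)
  have : (m : ℝ) + 1 + α + 1 ≠ 0 := ne_zero_of_eq_add_intCast hα (2 + m) (by push_cast; ring)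
  field_simp
  simp only [b]
  ring

lemma HR_contiguous (α β : ℝ) (hα : ∀ m : ℤ, α ≠ m) (hβ : ∀ m : ℤ, β ≠ m) (m : ℕ) (z : ℝ) :
    HR (α + 1) (β - 1) (m + 1) z = HR α β (m + 1) z + bco α β (m + 1) * HR α β m z := by
  have hlast : hrCoef α β m (m + 1) = 0 := by
    rw [hrCoef, poch_neg_natCast_succ, zero_mul, zero_div, mul_zero]
  rw [HR_eq_sum, HR_eq_sum, HR_eq_sum α β m, ← add_zero (∑ k ∈ range (m + 1), _),
    ← zero_mul (z ^ (m + 1)), ← hlast, ← sum_range_succ, mul_sum, ← sum_add_distrib]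
  refine sum_congr rfl fun k _ => ?_
  rw [hrCoef_contiguous α β hα hβ]
  ring

section Ccoef

variable (α β : ℝ)

@[simp]
lemma Ccoef_zero (n j : ℕ) : Ccoef α β n j 0 = 1 := by
  rw [Ccoef]

lemma Ccoef_one (n j : ℕ) :
    Ccoef α β n j 1 = ∑ k ∈ range j, bco (α + k) (β - k) n := by
  rw [Ccoef]
  split_ifs with hj
  · rfl
  · obtain rfl : j = 0 := by omega
    rfl

lemma Ccoef_succ_self (n j : ℕ) : Ccoef α β n j (j + 1) = 0 := by
  cases j with
  | zero => rw [Ccoef_one, range_zero, sum_empty]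
  | succ j => rw [Ccoef, if_neg (by omega), if_neg (by omega)]

lemma Ccoef_self (n j : ℕ) :
    Ccoef α β n (j + 1) (j + 1) = ∏ k ∈ range (j + 1), bco (α + j - k) (β - j + k) (n - k) := by
  cases j with
  | zero => simp [Ccoef_one]
  | succ j => rw [Ccoef, if_pos rfl]

/-- The defining recursion of `Ccoef` also holds at the boundary cases `l = 1` and `l = j`. -/
lemma Ccoef_succ_succ (n j i : ℕ) (hi : i ≤ j) :
    Ccoef α β (n + 1) (j + 1) (i + 1)
      = Ccoef α β (n + 1) j (i + 1) + bco (α + j) (β - j) (n + 1) * Ccoef α β n j i := by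
  rcases i with _ | i
  · simp [Ccoef_one, sum_range_succ, add_comm]
  rcases hi.lt_or_eq with hij | rfl
  · rw [Ccoef, if_neg (by omega), if_pos (by omega)]
    push_cast
    rfl
  · rw [Ccoef_succ_self, zero_add, Ccoef_self, Ccoef_self, prod_range_succ']
    push_cast
    rw [mul_comm]
    congr 1
    · simp
    · exact prod_congr rfl fun k _ => by ring_nf

end Ccoef

theorem HR_shift_eq_sum_Ccoef (α β : ℝ) (hα : ∀ m : ℤ, α ≠ m) (hβ : ∀ m : ℤ, β ≠ m) {n j : ℕ}
    (hjn : j ≤ n) (z : ℝ) :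
    HR (α + j) (β - j) n z = ∑ l ∈ range (j + 1), Ccoef α β n j l * HR α β (n - l) z := by
  induction j generalizing n with
  | zero => simp
  | succ j ih =>
    obtain ⟨m, rfl⟩ : ∃ m, n = m + 1 := ⟨n - 1, by omega⟩
    have hαj : ∀ t : ℤ, α + j ≠ t := fun t h => hα (t - j) (by push_cast; linarith)
    have hβj : ∀ t : ℤ, β - j ≠ t := fun t h => hβ (t + j) (by push_cast; linarith)
    have hsplit : ∑ l ∈ range (j + 1), Ccoef α β (m + 1) j l * HR α β (m + 1 - l) z
        = HR α β (m + 1) z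
          + ∑ i ∈ range (j + 1), Ccoef α β (m + 1) j (i + 1) * HR α β (m - i) z := by
      rw [sum_range_succ' _ j, sum_range_succ _ j, Ccoef_succ_self, zero_mul, add_zero, Ccoef_zero,
        one_mul, Nat.sub_zero, add_comm]
      simp only [Nat.add_sub_add_right]
    calc HR (α + ↑(j + 1)) (β - ↑(j + 1)) (m + 1) z
        = HR (α + j) (β - j) (m + 1) z + bco (α + j) (β - j) (m + 1) * HR (α + j) (β - j) m z := by
          push_cast
          rw [← HR_contiguous _ _ hαj hβj, add_assoc, sub_add_eq_sub_sub]
      _ = _ := by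
          rw [ih (by omega), ih (by omega), hsplit, sum_range_succ' _ (j + 1), Ccoef_zero, one_mul,
            Nat.sub_zero, mul_sum, add_comm _ (HR α β (m + 1) z), add_assoc, ← sum_add_distrib]
          congr 1
          refine sum_congr rfl fun i hi => ?_
          rw [Ccoef_succ_succ α β m j i (Nat.lt_succ_iff.mp (mem_range.mp hi))]
          simp only [Nat.add_sub_add_right]
          ring

theorem stmt12_general (α β : ℝ)
    (hα : ∀ m : ℤ, α ≠ (m : ℝ)) (hβ : ∀ m : ℤ, β ≠ (m : ℝ))
    (n j : ℕ) (hjn : j ≤ n) (z : ℝ) :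
    HR (α + (j : ℝ)) (β - (j : ℝ)) n z
      = HR α β n z + ∑ l ∈ Finset.Icc 1 j, Ccoef α β n j l * HR α β (n - l) z := by
  rw [HR_shift_eq_sum_Ccoef α β hα hβ hjn, range_eq_Ico, sum_eq_sum_Ico_succ_bot (Nat.succ_pos j),
    Ccoef_zero, one_mul, Nat.sub_zero, zero_add, Nat.succ_eq_add_one, Ico_add_one_right_eq_Icc]

/-- For `1 ≤ j ≤ n`: `P_n(z; α+j, β−j) = P_n(z) + Σ_{l=1}^{j} C^{(l)}_{n,j} P_{n−l}(z)`. -/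
theorem stmt12 (α β : ℝ)
    (hα : ∀ m : ℤ, α ≠ (m : ℝ)) (hβ : ∀ m : ℤ, β ≠ (m : ℝ))
    (hαβ : ∀ m : ℤ, α + β ≠ (m : ℝ))
    (n j : ℕ) (hn : 1 ≤ n) (hj1 : 1 ≤ j) (hjn : j ≤ n) (z : ℝ) :
    HR (α + (j : ℝ)) (β - (j : ℝ)) n z
      = HR α β n z + ∑ l ∈ Finset.Icc 1 j, Ccoef α β n j l * HR α β (n - l) z :=
  stmt12_general α β hα hβ n j hjn z
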